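/- arXiv:1608.03154 — 3 statements merged into one kernel-verified Lean document; each statement's English description precedes it below -/
import Mathlib

section
/- Let d(z) = (1 - 2z/γ²)^{-1/2} exp(δγ(1 - √(1 - 2z/γ²))) for z ≤ 0, with δ, γ > 0. Then ∫_{-∞}^0 d(z) dz = γ/δ. -/
open MeasureTheory Real

/-! After the reflection `z = -x`, the integrand is `(1 + c x)^{-1/2} exp (b (1 - √(1 + c x)))`
with `b = δγ`, `c = 2/γ²`, which is `-2/(bc)` times the derivative of
`exp (b (1 - √(1 + c x)))`. That function equals `1` at `0` and tends to `0` at infinity,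
so the integral is `2/(bc) = γ/δ`. -/

open Filter Set Topology

section SqrtExponential

variable {b c : ℝ}

theorem hasDerivAt_exp_mul_one_sub_sqrt {x : ℝ} (hx : 0 < 1 + c * x) :
    HasDerivAt (fun y => exp (b * (1 - √(1 + c * y))))
      (-(b * c / 2) * ((1 + c * x) ^ (-(1 / 2 : ℝ)) * exp (b * (1 - √(1 + c * x))))) x := by
  have hlin : HasDerivAt (fun y => 1 + c * y) c x := by
    simpa using ((hasDerivAt_id x).const_mul c).const_add 1
  have hexp := (((hlin.sqrt hx.ne').const_sub 1).const_mul b).exp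
  refine hexp.congr_deriv ?_
  rw [rpow_neg hx.le, ← sqrt_eq_rpow]
  field_simp

theorem tendsto_exp_mul_one_sub_sqrt_atTop (hb : 0 < b) (hc : 0 < c) :
    Tendsto (fun x => exp (b * (1 - √(1 + c * x)))) atTop (𝓝 0) := by
  have hlin : Tendsto (fun x => 1 + c * x) atTop atTop :=
    tendsto_atTop_add_const_left _ 1 (tendsto_id.const_mul_atTop hc)
  have hsqrt := tendsto_sqrt_atTop.comp hlin
  refine tendsto_exp_atBot.comp (Tendsto.const_mul_atBot hb ?_)
  exact tendsto_atBot_add_const_left _ 1 (tendsto_neg_atBot_iff.mpr hsqrt)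

theorem integral_Ioi_rpow_mul_exp_mul_one_sub_sqrt (hb : 0 < b) (hc : 0 < c) :
    ∫ x in Ioi (0 : ℝ), (1 + c * x) ^ (-(1 / 2 : ℝ)) * exp (b * (1 - √(1 + c * x)))
      = 2 / (b * c) := by
  have hpos : ∀ x ∈ Ici (0 : ℝ), 0 < 1 + c * x := fun x hx => by
    have : 0 ≤ c * x := mul_nonneg hc.le hx; linarith
  have hderiv : ∀ x ∈ Ici (0 : ℝ), HasDerivAt
      (fun y => -(2 / (b * c)) * exp (b * (1 - √(1 + c * y))))
      ((1 + c * x) ^ (-(1 / 2 : ℝ)) * exp (b * (1 - √(1 + c * x)))) x := fun x hx => by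
    refine ((hasDerivAt_exp_mul_one_sub_sqrt (hpos x hx)).const_mul _).congr_deriv ?_
    field_simp
  have hnonneg : ∀ x ∈ Ioi (0 : ℝ),
      0 ≤ (1 + c * x) ^ (-(1 / 2 : ℝ)) * exp (b * (1 - √(1 + c * x))) := fun x hx =>
    mul_nonneg (rpow_nonneg (hpos x (mem_Ici_of_Ioi hx)).le _) (exp_pos _).le
  have hlim := (tendsto_exp_mul_one_sub_sqrt_atTop hb hc).const_mul (-(2 / (b * c)))
  rw [mul_zero] at hlim
  rw [integral_Ioi_of_hasDerivAt_of_nonneg' hderiv hnonneg hlim]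
  simp

end SqrtExponential

/-- For the sup-IG trawl function
`d(z) = (1 - 2z/γ²)^{-1/2} exp(δγ(1 - √(1 - 2z/γ²)))` with `δ, γ > 0`:
`∫_{-∞}^0 d(z) dz = γ/δ`. -/
theorem supIG_trawl_measure (δ γ : ℝ) (hδ : 0 < δ) (hγ : 0 < γ) :
    (∫ z in Set.Iic (0 : ℝ),
        (1 - 2 * z / γ ^ 2) ^ (-(1 / 2 : ℝ)) *
          Real.exp (δ * γ * (1 - Real.sqrt (1 - 2 * z / γ ^ 2)))) = γ / δ := by
  have hreflect : ∀ z : ℝ, 1 - 2 * z / γ ^ 2 = 1 + 2 / γ ^ 2 * -z := fun z => by ring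
  simp_rw [hreflect]
  rw [← neg_zero, integral_comp_neg_Iic (f := fun x =>
      (1 + 2 / γ ^ 2 * x) ^ (-(1 / 2 : ℝ)) * exp (δ * γ * (1 - √(1 + 2 / γ ^ 2 * x)))),
    neg_neg, integral_Ioi_rpow_mul_exp_mul_one_sub_sqrt (by positivity) (by positivity)]
  field_simp
end

section
/- Let d(z) = (1 - 2z/γ²)^{-1/2} exp(δγ(1 - √(1 - 2z/γ²))) be the sup-IG trawl function with δ, γ > 0. Then for h ≥ 0, (∫_{-∞}^0 d(z-h) dz)/(∫_{-∞}^0 d(z) dz) = exp(δγ(1 - √(1 + 2h/γ²))). -/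
/-!
The trawl function is the derivative of
`P(z) = (γ / δ) * exp (δ γ (1 - √(1 - 2 z / γ²)))`, which tends to `0` at `-∞`. Hence
`∫_{-∞}^0 d(z - h) dz = P(-h)`, and the ratio is `P(-h) / P(0)` with `P(0) = γ / δ`.
-/

open MeasureTheory Real Filter Set Topology

theorem integral_Iic_of_hasDerivAt_of_nonneg' {g g' : ℝ → ℝ} {a m : ℝ}
    (hderiv : ∀ x ∈ Iic a, HasDerivAt g (g' x) x) (g'pos : ∀ x ∈ Iio a, 0 ≤ g' x)
    (hg : Tendsto g atBot (𝓝 m)) : ∫ x in Iic a, g' x = g a - m := by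
  have hderiv_neg : ∀ x ∈ Ici (-a), HasDerivAt (fun x => -g (-x)) (g' (-x)) x := fun x hx => by
    have h := ((hderiv (-x) (mem_Iic.2 (neg_le.mp hx))).comp x (hasDerivAt_neg x)).neg
    rwa [mul_neg_one, neg_neg] at h
  have hpos_neg : ∀ x ∈ Ioi (-a), 0 ≤ g' (-x) := fun x hx => g'pos (-x) (mem_Iio.2 (neg_lt.mp hx))
  have hlim_neg : Tendsto (fun x => -g (-x)) atTop (𝓝 (-m)) :=
    (hg.comp tendsto_neg_atTop_atBot).neg
  rw [← neg_neg a, ← integral_comp_neg_Ioi,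
    integral_Ioi_of_hasDerivAt_of_nonneg' hderiv_neg hpos_neg hlim_neg]
  simp only [neg_neg]
  ring

noncomputable def supIGTrawl (δ γ z : ℝ) : ℝ :=
  (1 - 2 * z / γ ^ 2) ^ (-(1 / 2 : ℝ)) * Real.exp (δ * γ * (1 - Real.sqrt (1 - 2 * z / γ ^ 2)))

noncomputable def supIGTrawlPrimitive (δ γ z : ℝ) : ℝ :=
  γ / δ * Real.exp (δ * γ * (1 - Real.sqrt (1 - 2 * z / γ ^ 2)))

section

variable {δ γ : ℝ}

lemma supIGTrawl_nonneg {z : ℝ} (hz : 0 < 1 - 2 * z / γ ^ 2) : 0 ≤ supIGTrawl δ γ z := by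
  unfold supIGTrawl
  positivity

lemma hasDerivAt_supIGTrawlPrimitive {z : ℝ} (hδ : δ ≠ 0) (hγ : γ ≠ 0)
    (hz : 0 < 1 - 2 * z / γ ^ 2) :
    HasDerivAt (supIGTrawlPrimitive δ γ) (supIGTrawl δ γ z) z := by
  have hu : HasDerivAt (fun z => 1 - 2 * z / γ ^ 2) (-(2 / γ ^ 2)) z := by
    simpa using ((hasDerivAt_id z).const_mul 2).div_const (γ ^ 2) |>.const_sub 1
  have hP := ((hu.sqrt hz.ne').const_sub 1 |>.const_mul (δ * γ)).exp.const_mul (γ / δ)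
  refine hP.congr_deriv ?_
  rw [supIGTrawl, rpow_neg hz.le, ← sqrt_eq_rpow]
  have hs : 0 < √(1 - 2 * z / γ ^ 2) := sqrt_pos.2 hz
  field_simp

lemma tendsto_supIGTrawlPrimitive_atBot (hδγ : 0 < δ * γ) :
    Tendsto (supIGTrawlPrimitive δ γ) atBot (𝓝 0) := by
  have hγ2 : 0 < γ ^ 2 := by
    have hγ : γ ≠ 0 := by rintro rfl; simp at hδγ
    positivity
  have hu : Tendsto (fun z : ℝ => 1 - 2 * z / γ ^ 2) atBot atTop :=
    tendsto_atTop_add_const_left _ 1 <| tendsto_neg_atBot_atTop.comp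
      ((tendsto_id.const_mul_atBot two_pos).atBot_div_const hγ2)
  have hexp : Tendsto (fun z => δ * γ * (1 - √(1 - 2 * z / γ ^ 2))) atBot atBot :=
    (tendsto_const_mul_atBot_of_pos hδγ).2 <|
      tendsto_atBot_add_const_left _ 1 (tendsto_neg_atBot_iff.2 (tendsto_sqrt_atTop.comp hu))
  have hP := (tendsto_exp_atBot.comp hexp).const_mul (γ / δ)
  rwa [mul_zero] at hP

lemma supIGTrawlPrimitive_zero : supIGTrawlPrimitive δ γ 0 = γ / δ := by
  simp [supIGTrawlPrimitive]

lemma integral_Iic_supIGTrawl_sub {a h : ℝ} (hδγ : 0 < δ * γ) (ha : 0 < 1 - 2 * (a - h) / γ ^ 2) :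
    ∫ z in Iic a, supIGTrawl δ γ (z - h) = supIGTrawlPrimitive δ γ (a - h) := by
  have hδ : δ ≠ 0 := by rintro rfl; simp at hδγ
  have hγ : γ ≠ 0 := by rintro rfl; simp at hδγ
  have hdom : ∀ z ∈ Iic a, 0 < 1 - 2 * (z - h) / γ ^ 2 := fun z hz => by
    refine ha.trans_le (sub_le_sub_left ?_ 1)
    gcongr
    exact hz
  have hlim : Tendsto (fun z => supIGTrawlPrimitive δ γ (z - h)) atBot (𝓝 0) :=
    (tendsto_supIGTrawlPrimitive_atBot hδγ).comp (tendsto_atBot_add_const_right _ (-h) tendsto_id)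
  rw [integral_Iic_of_hasDerivAt_of_nonneg'
    (fun z hz => (hasDerivAt_supIGTrawlPrimitive hδ hγ (hdom z hz)).comp_sub_const z h)
    (fun z hz => supIGTrawl_nonneg (hdom z (mem_Iic.2 (le_of_lt hz)))) hlim, sub_zero]

end

/-- For the sup-IG trawl function with `δ, γ > 0` and `h ≥ 0`:
`(∫_{-∞}^0 d(z-h) dz)/(∫_{-∞}^0 d(z) dz) = exp(δγ(1 - √(1 + 2h/γ²)))`. -/
theorem supIG_trawl_autocorrelation (δ γ h : ℝ) (hδ : 0 < δ) (hγ : 0 < γ) (hh : 0 ≤ h) :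
    (∫ z in Set.Iic (0 : ℝ),
        (1 - 2 * (z - h) / γ ^ 2) ^ (-(1 / 2 : ℝ)) *
          Real.exp (δ * γ * (1 - Real.sqrt (1 - 2 * (z - h) / γ ^ 2)))) /
      (∫ z in Set.Iic (0 : ℝ),
        (1 - 2 * z / γ ^ 2) ^ (-(1 / 2 : ℝ)) *
          Real.exp (δ * γ * (1 - Real.sqrt (1 - 2 * z / γ ^ 2)))) =
      Real.exp (δ * γ * (1 - Real.sqrt (1 + 2 * h / γ ^ 2))) := by
  have hδγ : 0 < δ * γ := mul_pos hδ hγ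
  have hshift : 1 - 2 * (0 - h) / γ ^ 2 = 1 + 2 * h / γ ^ 2 := by ring
  have hnum := integral_Iic_supIGTrawl_sub (a := 0) (h := h) hδγ
    (by rw [hshift]; positivity)
  have hden := integral_Iic_supIGTrawl_sub (a := 0) (h := 0) hδγ (by simp)
  simp only [sub_zero] at hden
  show (∫ z in Iic 0, supIGTrawl δ γ (z - h)) / (∫ z in Iic 0, supIGTrawl δ γ z) = _
  rw [hnum, hden, supIGTrawlPrimitive_zero, supIGTrawlPrimitive, hshift,
    mul_div_cancel_left₀ _ (by positivity)]
end

section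
/- Let U, V_1, ..., V_n be independent subordinators (evaluated at time 1) without drift, with Lévy measures ν_U, ν_{V_i} on (0,∞), and let α_i ≥ 0 with α = ∑ α_i. Assume X given (Z_1,...,Z_n), Z_i = α_i U + V_i, has independent Poisson(Z_i) components. Then the Laplace transform of X = (X_1,...,X_n) at θ ∈ (0,∞)^n can be written as exp(-v + v ℒ_C(θ)) with Poisson rate v = -(K̄_U(α) + ∑_i K̄_{V_i}(1)) and jump-size Laplace transform ℒ_C(θ) = (1/v)[ ∑_{k≥1} (∑_i α_i e^{-θ_i})^k q_k^{(U)} + ∑_i ∑_{k≥1} e^{-θ_i k} q_k^{(V_i)} ], where K̄ denotes the log-Laplace transform, q_k^{(U)} = (1/k!) ∫ e^{-αx} x^k ν_U(dx), and q_k^{(V_i)} = (1/k!) ∫ e^{-x} x^k ν_{V_i}(dx). In particular X is compound Poisson. -/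
/-!
Expanding `e^{s x} - 1 = ∑_{k ≥ 1} (s x)^k / k!` under the Lévy integral, where every term is
nonnegative so that summation and integration commute, gives
`K̄(c - s) = K̄(c) + ∑_{k ≥ 1} s^k q_k(c)` for `0 ≤ s ≤ c`. Taking `c = α`, `s = ∑ αᵢ e^{-θᵢ}` for
`U` and `c = 1`, `s = e^{-θᵢ}` for each `Vᵢ`, the exponent of the Poisson mixture transform becomes
`-v` plus a series in the `e^{-θᵢ}` with nonnegative coefficients. Kumulants are nonpositive, so
that series is at most `v`; in particular it vanishes when `v = 0`, where `v * (1 / v)` is `0`.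
-/

open MeasureTheory ProbabilityTheory Real

/-- Kumulant function (log-Laplace transform) of a driftless subordinator with
Lévy measure `ν`: `K̄(θ) = ∫ (e^{-θx} - 1) ν(dx)`. -/
noncomputable def kumulant (ν : Measure ℝ) (θ : ℝ) : ℝ :=
  ∫ x, (Real.exp (-(θ * x)) - 1) ∂ν

/-- The coefficients `q_k = (1/k!) ∫ e^{-c x} x^k ν(dx)`. -/
noncomputable def qCoef (ν : Measure ℝ) (c : ℝ) (k : ℕ) : ℝ :=
  (1 / (Nat.factorial k : ℝ)) * ∫ x, Real.exp (-(c * x)) * x ^ k ∂ν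

theorem MeasureTheory.integral_eq_tsum_integral_of_nonneg {α ι : Type*} [MeasurableSpace α]
    [Countable ι] {μ : Measure α} {f : ι → α → ℝ} {g : α → ℝ}
    (hf : ∀ k, AEStronglyMeasurable (f k) μ) (hf0 : ∀ k, 0 ≤ᵐ[μ] f k)
    (hfg : ∀ᵐ x ∂μ, HasSum (fun k ↦ f k x) (g x)) (hg : Integrable g μ) :
    ∫ x, g x ∂μ = ∑' k, ∫ x, f k x ∂μ := by
  have hlin : ∑' k, ∫⁻ x, ‖f k x‖ₑ ∂μ = ∫⁻ x, ENNReal.ofReal (g x) ∂μ := by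
    rw [← lintegral_tsum fun k ↦ (hf k).enorm]
    refine lintegral_congr_ae ?_
    filter_upwards [hfg, ae_all_iff.2 hf0] with x hx h0
    rw [← hx.tsum_eq, ENNReal.ofReal_tsum_of_nonneg h0 hx.summable]
    exact tsum_congr fun k ↦ Real.enorm_eq_ofReal (h0 k)
  rw [← integral_tsum hf (hlin ▸ hg.lintegral_lt_top.ne)]
  exact integral_congr_ae (hfg.mono fun x hx ↦ hx.tsum_eq.symm)

theorem ae_pos_of_measure_Iic_eq_zero {ν : Measure ℝ} (hν : ν (Set.Iic 0) = 0) :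
    ∀ᵐ x ∂ν, 0 < x := by
  rw [ae_iff]; simp only [not_lt]; exact hν

theorem Real.hasSum_pow_succ_div_factorial (y : ℝ) :
    HasSum (fun k : ℕ ↦ y ^ (k + 1) / (k + 1).factorial) (Real.exp y - 1) := by
  have h := (hasSum_nat_add_iff' 1).2 (NormedSpace.expSeries_div_hasSum_exp y)
  simpa [← Real.exp_eq_exp_ℝ] using h

theorem one_sub_exp_neg_mul_le_max_mul_min {θ x : ℝ} (hx : 0 < x) :
    1 - Real.exp (-(θ * x)) ≤ max 1 θ * min 1 x := by
  have h1 : 1 - Real.exp (-(θ * x)) ≤ 1 := by linarith [Real.exp_pos (-(θ * x))]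
  have h2 : 1 - Real.exp (-(θ * x)) ≤ θ * x := by linarith [Real.add_one_le_exp (-(θ * x))]
  rcases le_total 1 x with h | h
  · rw [min_eq_left h, mul_one]; exact h1.trans (le_max_left _ _)
  · rw [min_eq_right h]; exact h2.trans (by gcongr; exact le_max_right _ _)

section LevyMeasure

variable {ν : Measure ℝ}

theorem integrable_exp_neg_mul_sub_one (hν0 : ν (Set.Iic 0) = 0)
    (hν : Integrable (fun x ↦ min 1 x) ν) {θ : ℝ} (hθ : 0 ≤ θ) :
    Integrable (fun x ↦ Real.exp (-(θ * x)) - 1) ν := by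
  refine (hν.const_mul (max 1 θ)).mono (by fun_prop) ?_
  filter_upwards [ae_pos_of_measure_Iic_eq_zero hν0] with x hx
  have hle : Real.exp (-(θ * x)) ≤ 1 := Real.exp_le_one_iff.2 (by nlinarith)
  rw [Real.norm_of_nonpos (by linarith), Real.norm_of_nonneg (by positivity)]
  linarith [one_sub_exp_neg_mul_le_max_mul_min (θ := θ) hx]

theorem kumulant_nonpos (hν0 : ν (Set.Iic 0) = 0) {θ : ℝ} (hθ : 0 ≤ θ) : kumulant ν θ ≤ 0 := by
  refine integral_nonpos_of_ae ?_
  filter_upwards [ae_pos_of_measure_Iic_eq_zero hν0] with x hx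
  simpa using Real.exp_le_one_iff.2 (by nlinarith : -(θ * x) ≤ 0)

theorem qCoef_nonneg (hν0 : ν (Set.Iic 0) = 0) (c : ℝ) (k : ℕ) : 0 ≤ qCoef ν c k := by
  refine mul_nonneg (by positivity) (integral_nonneg_of_ae ?_)
  filter_upwards [ae_pos_of_measure_Iic_eq_zero hν0] with x hx
  positivity

theorem kumulant_sub_eq_add_tsum (hν0 : ν (Set.Iic 0) = 0)
    (hν : Integrable (fun x ↦ min 1 x) ν) {c s : ℝ} (hs : 0 ≤ s) (hsc : s ≤ c) :
    kumulant ν (c - s) = kumulant ν c + ∑' k : ℕ, s ^ (k + 1) * qCoef ν c (k + 1) := by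
  set f : ℕ → ℝ → ℝ := fun k x ↦
    s ^ (k + 1) * (1 / ((k + 1).factorial : ℝ) * (Real.exp (-(c * x)) * x ^ (k + 1)))
  have hf : ∀ x, HasSum (fun k ↦ f k x) (Real.exp (-((c - s) * x)) - Real.exp (-(c * x))) := by
    intro x
    have h := (Real.hasSum_pow_succ_div_factorial (s * x)).mul_left (Real.exp (-(c * x)))
    have hfx : (fun k ↦ f k x) = fun k ↦
        Real.exp (-(c * x)) * ((s * x) ^ (k + 1) / (k + 1).factorial) :=
      funext fun k ↦ by simp only [f]; ring
    rw [hfx, show -((c - s) * x) = -(c * x) + s * x by ring, Real.exp_add, ← mul_sub_one]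
    exact h
  have hf0 : ∀ k, 0 ≤ᵐ[ν] f k := fun k ↦ by
    filter_upwards [ae_pos_of_measure_Iic_eq_zero hν0] with x hx
    positivity
  have h₁ := integrable_exp_neg_mul_sub_one hν0 hν (sub_nonneg.2 hsc)
  have h₂ := integrable_exp_neg_mul_sub_one hν0 hν (hs.trans hsc)
  have hdiff : kumulant ν (c - s) - kumulant ν c =
      ∫ x, (Real.exp (-((c - s) * x)) - Real.exp (-(c * x))) ∂ν := by
    rw [kumulant, kumulant, ← integral_sub h₁ h₂]
    simp
  have hsum := integral_eq_tsum_integral_of_nonneg (fun k ↦ by fun_prop) hf0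
    (.of_forall hf) ((h₁.sub h₂).congr (.of_forall fun x ↦ by simp))
  rw [← sub_eq_iff_eq_add', hdiff, hsum]
  simp only [f, integral_const_mul, qCoef]

end LevyMeasure

theorem mul_one_div_mul_of_imp {a b : ℝ} (h : a = 0 → b = 0) : a * (1 / a * b) = b := by
  rw [one_div_mul_eq_div, mul_comm, div_mul_cancel_of_imp h]

theorem poisson_mixture_compound_poisson_general
    {Ω : Type*} [MeasurableSpace Ω] (μ : Measure Ω)
    (n : ℕ) (X : Fin n → Ω → ℝ)
    (νU : Measure ℝ) (νV : Fin n → Measure ℝ)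
    -- Lévy measures on (0,∞) of the driftless subordinators U, V₁, …, V_n
    (hνU0 : νU (Set.Iic 0) = 0) (hνV0 : ∀ i, νV i (Set.Iic 0) = 0)
    (hνUint : Integrable (fun x => min 1 x) νU)
    (hνVint : ∀ i, Integrable (fun x => min 1 x) (νV i))
    (α : Fin n → ℝ) (hα : ∀ i, 0 ≤ α i)
    -- conditionally on Z_i = αᵢ U + Vᵢ, the X_i are independent Poisson(Z_i), so that
    -- the Laplace transform of X is the Poisson mixture transform:
    (hmix : ∀ θ : Fin n → ℝ, (∀ i, 0 < θ i) →
      ∫ ω, Real.exp (-∑ i, θ i * X i ω) ∂μ =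
        Real.exp (kumulant νU (∑ i, α i * (1 - Real.exp (-θ i))) +
          ∑ i, kumulant (νV i) (1 - Real.exp (-θ i)))) :
    ∀ θ : Fin n → ℝ, (∀ i, 0 < θ i) →
      ∫ ω, Real.exp (-∑ i, θ i * X i ω) ∂μ =
        Real.exp (-(-(kumulant νU (∑ i, α i) + ∑ i, kumulant (νV i) 1)) +
          (-(kumulant νU (∑ i, α i) + ∑ i, kumulant (νV i) 1)) *
            ((1 / (-(kumulant νU (∑ i, α i) + ∑ i, kumulant (νV i) 1))) *
              (∑' k : ℕ,
                  (∑ i, α i * Real.exp (-θ i)) ^ (k + 1) *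
                    qCoef νU (∑ i, α i) (k + 1) +
                ∑ i, ∑' k : ℕ,
                  Real.exp (-(θ i * (k + 1))) * qCoef (νV i) 1 (k + 1)))) := by
  intro θ hθ
  have he : ∀ i, Real.exp (-θ i) ≤ 1 := fun i ↦ Real.exp_le_one_iff.2 (by linarith [hθ i])
  set s := ∑ i, α i * Real.exp (-θ i)
  have hs : 0 ≤ s := Finset.sum_nonneg fun i _ ↦ by have := hα i; positivity
  have hsc : s ≤ ∑ i, α i := Finset.sum_le_sum fun i _ ↦ mul_le_of_le_one_right (hα i) (he i)
  have hU : kumulant νU (∑ i, α i * (1 - Real.exp (-θ i))) = kumulant νU (∑ i, α i) +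
      ∑' k : ℕ, s ^ (k + 1) * qCoef νU (∑ i, α i) (k + 1) := by
    simpa [mul_sub, Finset.sum_sub_distrib] using
      kumulant_sub_eq_add_tsum hνU0 hνUint hs hsc
  have hV : ∀ i, kumulant (νV i) (1 - Real.exp (-θ i)) = kumulant (νV i) 1 +
      ∑' k : ℕ, Real.exp (-(θ i * (k + 1))) * qCoef (νV i) 1 (k + 1) := fun i ↦ by
    simpa [← Real.exp_nat_mul, mul_comm] using
      kumulant_sub_eq_add_tsum (hνV0 i) (hνVint i) (Real.exp_pos _).le (he i)
  have hjumps : 0 ≤ (∑' k : ℕ, s ^ (k + 1) * qCoef νU (∑ i, α i) (k + 1)) +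
      ∑ i, ∑' k : ℕ, Real.exp (-(θ i * (k + 1))) * qCoef (νV i) 1 (k + 1) :=
    add_nonneg (tsum_nonneg fun k ↦ mul_nonneg (pow_nonneg hs _) (qCoef_nonneg hνU0 _ _))
      (Finset.sum_nonneg fun i _ ↦
        tsum_nonneg fun k ↦ mul_nonneg (Real.exp_pos _).le (qCoef_nonneg (hνV0 i) _ _))
  have hexponent : kumulant νU (∑ i, α i * (1 - Real.exp (-θ i))) +
      ∑ i, kumulant (νV i) (1 - Real.exp (-θ i)) ≤ 0 :=
    add_nonpos
      (kumulant_nonpos hνU0 (Finset.sum_nonneg fun i _ ↦ mul_nonneg (hα i) (by linarith [he i])))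
      (Finset.sum_nonpos fun i _ ↦ kumulant_nonpos (hνV0 i) (by linarith [he i]))
  rw [hmix θ hθ]
  rw [hU, Finset.sum_congr rfl fun i _ ↦ hV i, Finset.sum_add_distrib] at hexponent ⊢
  rw [mul_one_div_mul_of_imp fun _ ↦ by linarith]
  ring_nf

/-- Compound Poisson representation of the Poisson mixture of random-additive-effect
type: its Laplace transform equals `exp(-v + v ℒ_C(θ))` with rate
`v = -(K̄_U(α) + ∑ K̄_{Vᵢ}(1))` and jump-size Laplace transform
`ℒ_C(θ) = (1/v)[∑_{k≥1} (∑ αᵢ e^{-θᵢ})^k q_k^{(U)} + ∑ᵢ ∑_{k≥1} e^{-θᵢ k} q_k^{(Vᵢ)}]`. -/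
theorem poisson_mixture_compound_poisson
    {Ω : Type*} [MeasurableSpace Ω] (μ : Measure Ω) [IsProbabilityMeasure μ]
    (n : ℕ) (X : Fin n → Ω → ℝ) (hXm : ∀ i, Measurable (X i))
    (νU : Measure ℝ) (νV : Fin n → Measure ℝ)
    -- Lévy measures on (0,∞) of the driftless subordinators U, V₁, …, V_n
    (hνU0 : νU (Set.Iic 0) = 0) (hνV0 : ∀ i, νV i (Set.Iic 0) = 0)
    (hνUint : Integrable (fun x => min 1 x) νU)
    (hνVint : ∀ i, Integrable (fun x => min 1 x) (νV i))
    (α : Fin n → ℝ) (hα : ∀ i, 0 ≤ α i)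
    -- conditionally on Z_i = αᵢ U + Vᵢ, the X_i are independent Poisson(Z_i), so that
    -- the Laplace transform of X is the Poisson mixture transform:
    (hmix : ∀ θ : Fin n → ℝ, (∀ i, 0 < θ i) →
      ∫ ω, Real.exp (-∑ i, θ i * X i ω) ∂μ =
        Real.exp (kumulant νU (∑ i, α i * (1 - Real.exp (-θ i))) +
          ∑ i, kumulant (νV i) (1 - Real.exp (-θ i)))) :
    ∀ θ : Fin n → ℝ, (∀ i, 0 < θ i) →
      ∫ ω, Real.exp (-∑ i, θ i * X i ω) ∂μ =
        Real.exp (-(-(kumulant νU (∑ i, α i) + ∑ i, kumulant (νV i) 1)) +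
          (-(kumulant νU (∑ i, α i) + ∑ i, kumulant (νV i) 1)) *
            ((1 / (-(kumulant νU (∑ i, α i) + ∑ i, kumulant (νV i) 1))) *
              (∑' k : ℕ,
                  (∑ i, α i * Real.exp (-θ i)) ^ (k + 1) *
                    qCoef νU (∑ i, α i) (k + 1) +
                ∑ i, ∑' k : ℕ,
                  Real.exp (-(θ i * (k + 1))) * qCoef (νV i) 1 (k + 1)))) :=
  poisson_mixture_compound_poisson_general μ n X νU νV hνU0 hνV0 hνUint hνVint α hα hmix
end
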